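/- Let K : ℝ → ℝ be a kernel supported on [-1,1], let X ⊆ ℝ and x ∈ X, and define the transformation H(g)(u) = ∫_{(X-x)/h} 1(v ≥ u) K(v) g(v) dv. If g₁, g₂ are bounded measurable functions on (X-x)/h and at least one of ∫_{(X-x)/h} K(u) g₁(u) du, ∫_{(X-x)/h} K(u) g₂(u) du equals zero, then ∫_{((X-x)/h) ∩ [-1,1]} H(g₁)(u) H(g₂)(u) du = ∬_{(X-x)/h × (X-x)/h} K(u) K(v) g₁(u) g₂(v) (u ∧ v) du dv. -/

import Mathlib

open MeasureTheory Set

/-!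
With `f_i = K g_i` and `F_i(u) = ∫_S 1(u ≤ v) f_i(v) dv`, the product `F₁(u) F₂(u)` is the
double integral of `1(u ≤ s ∧ t) f₁(s) f₂(t)`. Integrating over `u ∈ S ∩ [-1, 1] = [c, d]` and
exchanging the order of integration gives `∬ f₁(s) f₂(t) (s ∧ t - c)`, because `s ∧ t ∈ [c, d]`
wherever `f₁(s) f₂(t) ≠ 0`. The remaining term `c ∬ f₁(s) f₂(t) = c (∫ f₁) (∫ f₂)` vanishes.
-/

noncomputable def tailIntegral (μ : Measure ℝ) (f : ℝ → ℝ) (u : ℝ) : ℝ :=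
  ∫ v, (if u ≤ v then 1 else 0) * f v ∂μ

lemma integral_Icc_ite_le {c d m : ℝ} (hcm : c ≤ m) (hmd : m ≤ d) :
    ∫ u in Icc c d, (if u ≤ m then (1 : ℝ) else 0) = m - c := by
  have hind : (fun u : ℝ => if u ≤ m then (1 : ℝ) else 0) = (Iic m).indicator 1 := by
    ext u; simp [indicator_apply]
  have hinter : Icc c d ∩ Iic m = Icc c m := by
    ext u; simp only [mem_inter_iff, mem_Icc, mem_Iic]; grind
  rw [hind, setIntegral_indicator measurableSet_Iic, hinter]
  simp [hcm]

section TailIntegral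

variable {μ : Measure ℝ} {f₁ f₂ : ℝ → ℝ} {c d : ℝ}

lemma tailIntegral_mul_tailIntegral [SFinite μ] (f₁ f₂ : ℝ → ℝ) (u : ℝ) :
    tailIntegral μ f₁ u * tailIntegral μ f₂ u
      = ∫ p, (if u ≤ min p.1 p.2 then 1 else 0) * (f₁ p.1 * f₂ p.2) ∂μ.prod μ := by
  rw [tailIntegral, tailIntegral, ← integral_prod_mul]
  congr 1 with p
  by_cases h₁ : u ≤ p.1 <;> by_cases h₂ : u ≤ p.2 <;> simp [h₁, h₂]

lemma integrable_ite_le_min_mul_prod [SFinite μ] {ν : Measure ℝ} [IsFiniteMeasure ν]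
    (hf₁ : Integrable f₁ μ) (hf₂ : Integrable f₂ μ) :
    Integrable (Function.uncurry fun u (p : ℝ × ℝ) =>
      (if u ≤ min p.1 p.2 then (1 : ℝ) else 0) * (f₁ p.1 * f₂ p.2)) (ν.prod (μ.prod μ)) := by
  have hprod := hf₁.mul_prod hf₂
  have hind : Measurable fun q : ℝ × ℝ × ℝ => if q.1 ≤ min q.2.1 q.2.2 then (1 : ℝ) else 0 :=
    Measurable.ite (measurableSet_le measurable_fst (by fun_prop)) measurable_const
      measurable_const
  refine (hprod.norm.comp_snd ν).mono' (hind.aestronglyMeasurable.mul hprod.1.comp_snd) ?_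
  refine Filter.Eventually.of_forall fun q => ?_
  simp only [Function.uncurry, norm_mul]
  split_ifs <;> simp [mul_nonneg]

lemma min_mem_Icc_of_mul_ne_zero {s t : ℝ} (h₁ : f₁ s ≠ 0 → s ∈ Icc c d)
    (h₂ : f₂ t ≠ 0 → t ∈ Icc c d) (h : f₁ s * f₂ t ≠ 0) : min s t ∈ Icc c d :=
  have hs := h₁ (left_ne_zero_of_mul h)
  have ht := h₂ (right_ne_zero_of_mul h)
  ⟨le_min hs.1 ht.1, (min_le_left s t).trans hs.2⟩

lemma ae_prod_min_mem_Icc_of_mul_ne_zero (hsupp₁ : ∀ᵐ s ∂μ, f₁ s ≠ 0 → s ∈ Icc c d)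
    (hsupp₂ : ∀ᵐ t ∂μ, f₂ t ≠ 0 → t ∈ Icc c d) :
    ∀ᵐ p ∂μ.prod μ, f₁ p.1 * f₂ p.2 ≠ 0 → min p.1 p.2 ∈ Icc c d := by
  filter_upwards [Measure.quasiMeasurePreserving_fst.ae hsupp₁,
    Measure.quasiMeasurePreserving_snd.ae hsupp₂] with p h₁ h₂
  exact min_mem_Icc_of_mul_ne_zero h₁ h₂

lemma integrable_mul_prod_mul_min (hsupp₁ : ∀ᵐ s ∂μ, f₁ s ≠ 0 → s ∈ Icc c d)
    (hsupp₂ : ∀ᵐ t ∂μ, f₂ t ≠ 0 → t ∈ Icc c d) (hf₁ : Integrable f₁ μ) (hf₂ : Integrable f₂ μ) :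
    Integrable (fun p : ℝ × ℝ => f₁ p.1 * f₂ p.2 * min p.1 p.2) (μ.prod μ) := by
  have hprod := hf₁.mul_prod hf₂
  refine (hprod.norm.mul_const (max |c| |d|)).mono'
    (hprod.1.mul (by fun_prop : Continuous fun p : ℝ × ℝ => min p.1 p.2).aestronglyMeasurable) ?_
  filter_upwards [ae_prod_min_mem_Icc_of_mul_ne_zero hsupp₁ hsupp₂] with p hp
  rw [norm_mul, Real.norm_eq_abs (min _ _)]
  by_cases h : f₁ p.1 * f₂ p.2 = 0
  · simp [h]
  · exact mul_le_mul_of_nonneg_left (abs_le_max_abs_abs (hp h).1 (hp h).2) (norm_nonneg _)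

variable [SFinite μ]

theorem integral_Icc_tailIntegral_mul_tailIntegral (hsupp₁ : ∀ᵐ s ∂μ, f₁ s ≠ 0 → s ∈ Icc c d)
    (hsupp₂ : ∀ᵐ t ∂μ, f₂ t ≠ 0 → t ∈ Icc c d) (hf₁ : Integrable f₁ μ)
    (hf₂ : Integrable f₂ μ) :
    ∫ u in Icc c d, tailIntegral μ f₁ u * tailIntegral μ f₂ u
      = ∫ p, f₁ p.1 * f₂ p.2 * (min p.1 p.2 - c) ∂μ.prod μ := by
  simp_rw [tailIntegral_mul_tailIntegral]
  rw [integral_integral_swap (integrable_ite_le_min_mul_prod hf₁ hf₂)]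
  refine integral_congr_ae ?_
  filter_upwards [ae_prod_min_mem_Icc_of_mul_ne_zero hsupp₁ hsupp₂] with p hp
  rw [integral_mul_const]
  by_cases h : f₁ p.1 * f₂ p.2 = 0
  · simp [h]
  · rw [integral_Icc_ite_le (hp h).1 (hp h).2, mul_comm]

theorem integral_Icc_tailIntegral_mul_tailIntegral_of_integral_eq_zero
    (hsupp₁ : ∀ᵐ s ∂μ, f₁ s ≠ 0 → s ∈ Icc c d) (hsupp₂ : ∀ᵐ t ∂μ, f₂ t ≠ 0 → t ∈ Icc c d)
    (hf₁ : Integrable f₁ μ) (hf₂ : Integrable f₂ μ) (hzero : ∫ s, f₁ s ∂μ = 0 ∨ ∫ t, f₂ t ∂μ = 0) :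
    ∫ u in Icc c d, tailIntegral μ f₁ u * tailIntegral μ f₂ u
      = ∫ s, ∫ t, f₁ s * f₂ t * min s t ∂μ ∂μ := by
  have hmin := integrable_mul_prod_mul_min hsupp₁ hsupp₂ hf₁ hf₂
  have hsplit : ∀ p : ℝ × ℝ, f₁ p.1 * f₂ p.2 * (min p.1 p.2 - c)
      = f₁ p.1 * f₂ p.2 * min p.1 p.2 - c * (f₁ p.1 * f₂ p.2) := fun p => by ring
  rw [integral_Icc_tailIntegral_mul_tailIntegral hsupp₁ hsupp₂ hf₁ hf₂, ← integral_prod _ hmin]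
  simp_rw [hsplit]
  rw [integral_sub hmin ((hf₁.mul_prod hf₂).const_mul c), integral_const_mul, integral_prod_mul]
  rcases hzero with h | h <;> simp [h]

end TailIntegral

lemma image_sub_div_Icc {h : ℝ} (hh : 0 < h) (x lo hi : ℝ) :
    (fun t => (t - x) / h) '' Icc lo hi = Icc ((lo - x) / h) ((hi - x) / h) := by
  have hcomp : (fun t => (t - x) / h) = (· * h⁻¹) ∘ (fun t => t - x) := by
    ext t; simp [div_eq_mul_inv]
  rw [hcomp, image_comp, image_sub_const_Icc, image_mul_right_Icc' _ _ (inv_pos.2 hh)]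
  simp only [div_eq_mul_inv]

lemma integrableOn_mul_of_hasCompactSupport {K g : ℝ → ℝ} {s : Set ℝ} (hsm : MeasurableSet s)
    (hs : volume s ≠ ⊤) (hK : Continuous K) (hKsupp : HasCompactSupport K) (hg : Measurable g)
    (hgb : ∃ M, ∀ u ∈ s, |g u| ≤ M) : IntegrableOn (fun u => K u * g u) s := by
  obtain ⟨M, hM⟩ := hgb
  obtain ⟨C, hC⟩ := hK.bounded_above_of_compact_support hKsupp
  have hgs : IntegrableOn g s := Measure.integrableOn_of_bounded hs hg.aestronglyMeasurable
    (M := M) ((ae_restrict_iff' hsm).2 (.of_forall hM))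
  exact hgs.bdd_mul hK.aestronglyMeasurable.restrict (Filter.Eventually.of_forall hC)

theorem stmt0_general (lo hi x h : ℝ) (hh : 0 < h)
    (K g₁ g₂ : ℝ → ℝ)
    (hKcont : Continuous K)
    (hKsupp : ∀ u, u ∉ Icc (-1 : ℝ) 1 → K u = 0)
    (S : Set ℝ) (hS : S = (fun t => (t - x) / h) '' Icc lo hi)
    (hg₁m : Measurable g₁) (hg₂m : Measurable g₂)
    (hg₁b : ∃ M, ∀ u ∈ S, |g₁ u| ≤ M) (hg₂b : ∃ M, ∀ u ∈ S, |g₂ u| ≤ M)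
    (H : (ℝ → ℝ) → ℝ → ℝ)
    (hH : ∀ g u, H g u = ∫ v in S, (if u ≤ v then (1 : ℝ) else 0) * K v * g v)
    (hzero : (∫ u in S, K u * g₁ u) = 0 ∨ (∫ u in S, K u * g₂ u) = 0) :
    (∫ u in S ∩ Icc (-1 : ℝ) 1, H g₁ u * H g₂ u)
      = ∫ u in S, ∫ v in S, K u * K v * g₁ u * g₂ v * min u v := by
  rw [image_sub_div_Icc hh] at hS
  have hSm : MeasurableSet S := hS ▸ measurableSet_Icc
  have hfin : volume S ≠ ⊤ := hS ▸ measure_Icc_lt_top.ne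
  have hKcs : HasCompactSupport K := HasCompactSupport.intro isCompact_Icc hKsupp
  have hHtail : ∀ g, H g = tailIntegral (volume.restrict S) (fun v => K v * g v) := fun g =>
    funext fun u => by simp only [hH, tailIntegral, mul_assoc]
  have hsupp : ∀ g : ℝ → ℝ, ∀ᵐ v ∂volume.restrict S,
      K v * g v ≠ 0 → v ∈ Icc (max ((lo - x) / h) (-1)) (min ((hi - x) / h) 1) := by
    intro g
    filter_upwards [ae_restrict_mem hSm] with v hv hne
    rw [← Icc_inter_Icc, ← hS]
    exact ⟨hv, not_not.mp (mt (hKsupp v) (left_ne_zero_of_mul hne))⟩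
  rw [hS, Icc_inter_Icc, ← hS, hHtail, hHtail,
    integral_Icc_tailIntegral_mul_tailIntegral_of_integral_eq_zero (hsupp g₁) (hsupp g₂)
      (integrableOn_mul_of_hasCompactSupport hSm hfin hKcont hKcs hg₁m hg₁b)
      (integrableOn_mul_of_hasCompactSupport hSm hfin hKcont hKcs hg₂m hg₂b) hzero]
  simp only [mul_assoc, mul_left_comm]

/-- H-transformation identity (Lemma SA-1(i)): for bounded measurable `g₁, g₂` on
`S = (X - x)/h` with at least one of `∫ K g₁`, `∫ K g₂` equal to zero,
`∫_{S ∩ [-1,1]} H(g₁) H(g₂) = ∬_{S×S} K(u) K(v) g₁(u) g₂(v) min(u,v)`. -/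
theorem stmt0 (lo hi x h : ℝ) (hx : x ∈ Icc lo hi) (hh : 0 < h)
    (K g₁ g₂ : ℝ → ℝ)
    (hK0 : ∀ u, 0 ≤ K u) (hKcont : Continuous K)
    (hKsupp : ∀ u, u ∉ Icc (-1 : ℝ) 1 → K u = 0)
    (S : Set ℝ) (hS : S = (fun t => (t - x) / h) '' Icc lo hi)
    (hg₁m : Measurable g₁) (hg₂m : Measurable g₂)
    (hg₁b : ∃ M, ∀ u ∈ S, |g₁ u| ≤ M) (hg₂b : ∃ M, ∀ u ∈ S, |g₂ u| ≤ M)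
    (H : (ℝ → ℝ) → ℝ → ℝ)
    (hH : ∀ g u, H g u = ∫ v in S, (if u ≤ v then (1 : ℝ) else 0) * K v * g v)
    (hzero : (∫ u in S, K u * g₁ u) = 0 ∨ (∫ u in S, K u * g₂ u) = 0) :
    (∫ u in S ∩ Icc (-1 : ℝ) 1, H g₁ u * H g₂ u)
      = ∫ u in S, ∫ v in S, K u * K v * g₁ u * g₂ v * min u v :=
  stmt0_general lo hi x h hh K g₁ g₂ hKcont hKsupp S hS hg₁m hg₂m hg₁b hg₂b H hH hzero
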